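/- arXiv:1409.2340 — 3 statements merged into one kernel-verified Lean document; each statement's English description precedes it below -/
import Mathlib

section
/- Let c₀>0, α∈[0,1], β=√(1−α²), and let m,n,b:ℝ→ℝ³ solve the self-similar profile system. Let A⁺∈ℝ³ be the limit of m(s) as s→+∞ and A⁻=(A₁⁺,−A₂⁺,−A₃⁺) the limit as s→−∞, and set M(s,t)=m(s/√t) for t>0. Then for every p∈(1,∞) there exists a constant C>0 such that for all t>0, the L^p(ℝ)-norm in s of M(s,t) − A⁺·χ_{(0,∞)}(s) − A⁻·χ_{(−∞,0)}(s) is at most C·t^{1/(2p)}. Moreover, if α>0 the same estimate also holds for p=1. -/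
open Real Filter

/-- The Serret–Frenet system with curvature `c` and torsion `τ` for
functions `m n b : ℝ → ℝ³`. -/
def SerretFrenet (c τ : ℝ → ℝ) (m n b : ℝ → Fin 3 → ℝ) : Prop :=
  ∀ s : ℝ,
    HasDerivAt m (c s • n s) s ∧
    HasDerivAt n ((-c s) • m s + τ s • b s) s ∧
    HasDerivAt b ((-τ s) • n s) s

/-- The self-similar profile system: Serret–Frenet with curvature
`c₀ e^{-αs²/4}`, torsion `βs/2` where `β = √(1-α²)`, and the canonical
initial conditions. -/
def ProfileSystem (c₀ α : ℝ) (m n b : ℝ → Fin 3 → ℝ) : Prop :=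
  SerretFrenet (fun s => c₀ * Real.exp (-α * s ^ 2 / 4))
    (fun s => Real.sqrt (1 - α ^ 2) * s / 2) m n b ∧
  m 0 = ![1, 0, 0] ∧ n 0 = ![0, 1, 0] ∧ b 0 = ![0, 0, 1]


open MeasureTheory

/-!
Each coordinate triple `(mᵢ, nᵢ, bᵢ)` solves a scalar Serret–Frenet system, which conserves
`mᵢ² + nᵢ² + bᵢ²`; hence solutions are bounded by `1` and determined by their value at `0`.
As the curvature is even and the torsion odd, this uniqueness gives
`m(-s) = diag(1, -1, -1) m(s)`, so the behaviour at `-∞` mirrors the one at `+∞`.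
For `s ≥ 1`, `|m(s) - A⁺| ≤ K / s`: when `α > 0` because the curvature decays like a Gaussian
(which even gives `K / s²`), and when `α = 0` by an integration by parts using `b' = -(s/2) n`.
The jump defect `m - A⁺ χ_{(0,∞)} - A⁻ χ_{(-∞,0)}` is therefore dominated by
`K (1 + |s|)^(-k)`, so it lies in `Lᵖ` once `k p > 1`, and the rescaling `s ↦ s / √t`
multiplies its `Lᵖ` norm by `t^(1/(2p))`.
-/

open Set Topology

def ScalarSerretFrenet (c τ x y z : ℝ → ℝ) : Prop :=
  ∀ s : ℝ,
    HasDerivAt x (c s * y s) s ∧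
    HasDerivAt y (-c s * x s + τ s * z s) s ∧
    HasDerivAt z (-τ s * y s) s

namespace ScalarSerretFrenet

variable {c τ x y z x' y' z' : ℝ → ℝ}

theorem sub (h : ScalarSerretFrenet c τ x y z) (h' : ScalarSerretFrenet c τ x' y' z') :
    ScalarSerretFrenet c τ (x - x') (y - y') (z - z') := fun s => by
  obtain ⟨hx, hy, hz⟩ := h s
  obtain ⟨hx', hy', hz'⟩ := h' s
  refine ⟨(hx.sub hx').congr_deriv ?_, (hy.sub hy').congr_deriv ?_,
    (hz.sub hz').congr_deriv ?_⟩ <;> simp only [Pi.sub_apply] <;> ring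

theorem neg (h : ScalarSerretFrenet c τ x y z) : ScalarSerretFrenet c τ (-x) (-y) (-z) :=
  fun s => by
    obtain ⟨hx, hy, hz⟩ := h s
    refine ⟨hx.neg.congr_deriv ?_, hy.neg.congr_deriv ?_, hz.neg.congr_deriv ?_⟩ <;>
      simp only [Pi.neg_apply] <;> ring

theorem reflect (h : ScalarSerretFrenet c τ x y z) (hc : ∀ s, c (-s) = c s)
    (hτ : ∀ s, τ (-s) = -τ s) :
    ScalarSerretFrenet c τ (fun s => x (-s)) (fun s => -y (-s)) (fun s => -z (-s)) := fun s => by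
  obtain ⟨hx, hy, hz⟩ := h (-s)
  refine ⟨(hx.comp s (hasDerivAt_neg s)).congr_deriv ?_,
    (hy.comp s (hasDerivAt_neg s)).neg.congr_deriv ?_,
    (hz.comp s (hasDerivAt_neg s)).neg.congr_deriv ?_⟩ <;> simp only [hc, hτ] <;> ring

theorem sq_add_sq_add_sq_eq (h : ScalarSerretFrenet c τ x y z) (s t : ℝ) :
    x s ^ 2 + y s ^ 2 + z s ^ 2 = x t ^ 2 + y t ^ 2 + z t ^ 2 := by
  have hE : ∀ s, HasDerivAt (fun s => x s ^ 2 + y s ^ 2 + z s ^ 2) 0 s := fun s => by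
    obtain ⟨hx, hy, hz⟩ := h s
    exact (((hx.pow 2).add (hy.pow 2)).add (hz.pow 2)).congr_deriv (by ring)
  exact is_const_of_deriv_eq_zero (fun s => (hE s).differentiableAt) (fun s => (hE s).deriv) s t

theorem eq_of_apply_zero_eq (h : ScalarSerretFrenet c τ x y z)
    (h' : ScalarSerretFrenet c τ x' y' z') (hx : x 0 = x' 0) (hy : y 0 = y' 0)
    (hz : z 0 = z' 0) : x = x' ∧ y = y' ∧ z = z' := by
  have hsq : ∀ s, (x s - x' s) ^ 2 + (y s - y' s) ^ 2 + (z s - z' s) ^ 2 = 0 := fun s => by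
    simpa [hx, hy, hz] using (h.sub h').sq_add_sq_add_sq_eq s 0
  refine ⟨funext fun s => ?_, funext fun s => ?_, funext fun s => ?_⟩ <;>
    nlinarith [hsq s, sq_nonneg (x s - x' s), sq_nonneg (y s - y' s), sq_nonneg (z s - z' s)]

theorem abs_le_one (h : ScalarSerretFrenet c τ x y z) (h0 : x 0 ^ 2 + y 0 ^ 2 + z 0 ^ 2 = 1)
    (s : ℝ) : |x s| ≤ 1 ∧ |y s| ≤ 1 ∧ |z s| ≤ 1 := by
  have := (h.sq_add_sq_add_sq_eq s 0).trans h0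
  simp only [← sq_le_one_iff_abs_le_one]
  refine ⟨?_, ?_, ?_⟩ <;> nlinarith [sq_nonneg (x s), sq_nonneg (y s), sq_nonneg (z s)]

end ScalarSerretFrenet

theorem SerretFrenet.scalar {c τ : ℝ → ℝ} {m n b : ℝ → Fin 3 → ℝ} (h : SerretFrenet c τ m n b)
    (i : Fin 3) : ScalarSerretFrenet c τ (m · i) (n · i) (b · i) := fun s => by
  obtain ⟨hm, hn, hb⟩ := h s
  refine ⟨?_, ?_, ?_⟩
  · simpa using hasDerivAt_pi.1 hm i
  · simpa using hasDerivAt_pi.1 hn i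
  · simpa using hasDerivAt_pi.1 hb i

theorem norm_sub_le_of_norm_deriv_le_div_pow {E : Type*} [NormedAddCommGroup E]
    [NormedSpace ℝ E] {f f' : ℝ → E} {L : E} {a K : ℝ} {k : ℕ} (ha : 0 < a) (hk : k ≠ 0)
    (hf : ∀ s ≥ a, HasDerivAt f (f' s) s) (hf' : ∀ s ≥ a, ‖f' s‖ ≤ k * K / s ^ (k + 1))
    (hL : Tendsto f atTop (𝓝 L)) (s : ℝ) (hs : a ≤ s) : ‖f s - L‖ ≤ K / s ^ k := by
  have hs0 : 0 < s := ha.trans_le hs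
  have hB : ∀ x > 0, HasDerivAt (fun S => K / s ^ k - K / S ^ k) (k * K / x ^ (k + 1)) x :=
    fun x hx => by
      obtain ⟨j, rfl⟩ := Nat.exists_eq_add_one.2 (Nat.pos_of_ne_zero hk)
      have hpow := (((hasDerivAt_pow (j + 1) x).inv (by positivity)).const_mul K).const_sub
        (K / s ^ (j + 1))
      simp only [Pi.inv_apply, ← div_eq_mul_inv, add_tsub_cancel_right] at hpow
      exact hpow.congr_deriv (by field_simp; ring)
  have hbound : ∀ S ≥ s, ‖f S - f s‖ ≤ K / s ^ k - K / S ^ k := fun S hS =>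
    image_norm_le_of_norm_deriv_right_le_deriv_boundary' (f := fun S => f S - f s)
      (fun x hx => ((hf x (hs.trans hx.1)).sub_const (f s)).continuousAt.continuousWithinAt)
      (fun x hx => ((hf x (hs.trans hx.1)).sub_const (f s)).hasDerivWithinAt) (by simp)
      (fun x hx => (hB x (hs0.trans_le hx.1)).continuousAt.continuousWithinAt)
      (fun x hx => (hB x (hs0.trans_le hx.1)).hasDerivWithinAt)
      (fun x hx => hf' x (hs.trans hx.1)) ⟨hS, le_rfl⟩
  have hlim : Tendsto (fun S => K / s ^ k - K / S ^ k) atTop (𝓝 (K / s ^ k)) := by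
    simpa using tendsto_const_nhds.sub
      (tendsto_const_nhds.div_atTop (tendsto_pow_atTop (α := ℝ) hk))
  rw [norm_sub_rev]
  exact le_of_tendsto_of_tendsto (hL.sub_const (f s)).norm hlim (eventually_atTop.2 ⟨s, hbound⟩)

theorem exp_neg_le_two_div_sq {u : ℝ} (hu : 0 < u) : exp (-u) ≤ 2 / u ^ 2 := by
  rw [exp_neg, inv_le_comm₀ (exp_pos u) (by positivity), inv_div]
  nlinarith [quadratic_le_exp_of_nonneg hu.le]

theorem abs_sub_le_of_hasDerivAt_gaussian_mul {x y : ℝ → ℝ} {c₀ α L : ℝ} (hc₀ : 0 ≤ c₀)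
    (hα : 0 < α) (hx : ∀ s, HasDerivAt x (c₀ * exp (-α * s ^ 2 / 4) * y s) s)
    (hy : ∀ s, |y s| ≤ 1) (hL : Tendsto x atTop (𝓝 L)) (s : ℝ) (hs : 1 ≤ s) :
    |x s - L| ≤ 16 * c₀ / α ^ 2 / s ^ 2 := by
  refine norm_sub_le_of_norm_deriv_le_div_pow one_pos two_ne_zero (fun s _ => hx s) ?_ hL s hs
  intro s hs
  have hs0 : 0 < s := one_pos.trans_le hs
  have hexp : exp (-α * s ^ 2 / 4) ≤ 32 / α ^ 2 / s ^ 4 := by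
    calc exp (-α * s ^ 2 / 4) = exp (-(α * s ^ 2 / 4)) := by ring_nf
      _ ≤ 2 / (α * s ^ 2 / 4) ^ 2 := exp_neg_le_two_div_sq (by positivity)
      _ = 32 / α ^ 2 / s ^ 4 := by field_simp; ring
  calc ‖c₀ * exp (-α * s ^ 2 / 4) * y s‖ ≤ c₀ * exp (-α * s ^ 2 / 4) := by
        rw [Real.norm_eq_abs, abs_mul, abs_of_nonneg (by positivity)]
        exact mul_le_of_le_one_right (by positivity) (hy s)
    _ ≤ c₀ * (32 / α ^ 2 / s ^ 4) := by gcongr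
    _ ≤ c₀ * (32 / α ^ 2 / s ^ 3) := by gcongr; norm_num
    _ = ((2 : ℕ) : ℝ) * (16 * c₀ / α ^ 2) / s ^ (2 + 1) := by push_cast; ring

theorem ScalarSerretFrenet.abs_sub_le_of_linear_torsion {x y z : ℝ → ℝ} {c₀ L : ℝ}
    (h : ScalarSerretFrenet (fun _ => c₀) (fun s => s / 2) x y z) (hc₀ : 0 ≤ c₀)
    (hz : ∀ s, |z s| ≤ 1) (hL : Tendsto x atTop (𝓝 L)) (s : ℝ) (hs : 1 ≤ s) :
    |x s - L| ≤ 4 * c₀ / s := by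
  have hz_div : ∀ s, ∀ r > 0, |2 * c₀ * z s / r| ≤ 2 * c₀ / r := fun s r hr => by
    rw [abs_div, abs_mul, abs_of_pos hr, abs_of_nonneg (by positivity)]
    exact div_le_div_of_nonneg_right (mul_le_of_le_one_right (by positivity) (hz s)) hr.le
  -- `z' = -(s/2) y`, so adding `2 c₀ z / s` cancels `x' = c₀ y` up to an `O(1/s²)` term.
  have hφ : ∀ s ≥ (1 : ℝ),
      HasDerivAt (fun s => x s + 2 * c₀ * z s / s) (-2 * c₀ * z s / s ^ 2) s := fun s hs => by
    have hs0 : s ≠ 0 := (one_pos.trans_le hs).ne'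
    refine ((h s).1.add (((h s).2.2.const_mul (2 * c₀)).div (hasDerivAt_id s) hs0)).congr_deriv ?_
    simp only [id]
    field_simp
    ring
  have hφL : Tendsto (fun s => x s + 2 * c₀ * z s / s) atTop (𝓝 L) := by
    have hdiv : Tendsto (fun s => 2 * c₀ * z s / s) atTop (𝓝 0) :=
      squeeze_zero_norm' ((eventually_gt_atTop 0).mono fun s hs => hz_div s s hs)
        (tendsto_const_nhds.div_atTop tendsto_id)
    simpa using hL.add hdiv
  have hφs := norm_sub_le_of_norm_deriv_le_div_pow one_pos one_ne_zero hφ (fun s hs => by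
    rw [Real.norm_eq_abs, neg_mul, neg_mul, neg_div, abs_neg]
    simpa using hz_div s (s ^ 2) (by nlinarith)) hφL s hs
  calc |x s - L| = |(x s + 2 * c₀ * z s / s - L) - 2 * c₀ * z s / s| := by ring_nf
    _ ≤ |x s + 2 * c₀ * z s / s - L| + |2 * c₀ * z s / s| := abs_sub _ _
    _ ≤ 2 * c₀ / s + 2 * c₀ / s := add_le_add (by simpa using hφs) (hz_div s s (by linarith))
    _ = 4 * c₀ / s := by ring

noncomputable def jumpDefect {E : Type*} [AddGroup E] (m : ℝ → E) (Ap Am : E) (s : ℝ) : E :=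
  m s - (Ioi 0).indicator (fun _ => Ap) s - (Iio 0).indicator (fun _ => Am) s

theorem jumpDefect_div {E : Type*} [AddGroup E] (m : ℝ → E) (Ap Am : E) {r : ℝ} (hr : 0 < r)
    (s : ℝ) : jumpDefect m Ap Am (s / r) =
      m (s / r) - (Ioi 0).indicator (fun _ => Ap) s - (Iio 0).indicator (fun _ => Am) s := by
  simp only [jumpDefect, indicator, mem_Ioi, mem_Iio, div_pos_iff_of_pos_right hr,
    div_lt_iff₀ hr, zero_mul]

section Lp

variable {E : Type*} [NormedAddCommGroup E]

theorem aestronglyMeasurable_jumpDefect {m : ℝ → E} (hm : Continuous m) (Ap Am : E)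
    (μ : Measure ℝ) : AEStronglyMeasurable (jumpDefect m Ap Am) μ :=
  (hm.aestronglyMeasurable.sub (aestronglyMeasurable_const.indicator measurableSet_Ioi)).sub
    (aestronglyMeasurable_const.indicator measurableSet_Iio)

theorem eLpNorm_comp_div (f : ℝ → E) {r : ℝ} (hr : 0 < r) (p : ENNReal) :
    eLpNorm (fun s => f (s / r)) p volume
      = ENNReal.ofReal r ^ (1 / p).toReal * eLpNorm f p volume := by
  have hr' : r⁻¹ ≠ 0 := inv_ne_zero hr.ne'
  rw [show (fun s => f (s / r)) = f ∘ (· * r⁻¹) from funext fun s => by simp [div_eq_mul_inv],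
    ← (measurableEmbedding_mulRight₀ hr').eLpNorm_map_measure, Real.map_volume_mul_right hr',
    inv_inv, abs_of_pos hr, eLpNorm_smul_measure_of_ne_zero (by simpa using hr), smul_eq_mul]

theorem memLp_of_norm_le_mul_one_add_abs_rpow_neg {f : ℝ → E} {K p r : ℝ}
    (hf : AEStronglyMeasurable f volume) (hp : 0 < p) (hrp : 1 < r * p)
    (hbd : ∀ s, ‖f s‖ ≤ K * (1 + |s|) ^ (-r)) : MemLp f (ENNReal.ofReal p) volume := by
  have hg : MemLp (fun s : ℝ => K * (1 + |s|) ^ (-r)) (ENNReal.ofReal p) volume := by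
    rw [← integrable_norm_rpow_iff (Measurable.aestronglyMeasurable (by fun_prop))
      (by simpa using hp) ENNReal.ofReal_ne_top, ENNReal.toReal_ofReal hp.le]
    refine ((integrable_one_add_norm (E := ℝ) (μ := volume) (r := r * p)
      (by simpa using hrp)).const_mul (|K| ^ p)).congr (ae_of_all _ fun s => ?_)
    simp only [Real.norm_eq_abs, abs_mul, abs_of_pos (by positivity : 0 < (1 + |s|) ^ (-r))]
    rw [mul_rpow (abs_nonneg _) (by positivity), ← rpow_mul (by positivity), neg_mul]
  exact hg.of_le hf (ae_of_all _ fun s => (hbd s).trans (le_abs_self _))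

theorem exists_eLpNorm_rescaled_jump_le {m : ℝ → E} {Ap Am : E} {p : ℝ} (hp : 0 < p)
    (hf : MemLp (jumpDefect m Ap Am) (ENNReal.ofReal p) volume) :
    ∃ C : ℝ, 0 < C ∧ ∀ t : ℝ, 0 < t →
      eLpNorm (fun s : ℝ => m (s / Real.sqrt t) - (Ioi (0 : ℝ)).indicator (fun _ => Ap) s
        - (Iio (0 : ℝ)).indicator (fun _ => Am) s) (ENNReal.ofReal p) volume
        ≤ ENNReal.ofReal (C * t ^ (1 / (2 * p))) := by
  set N := eLpNorm (jumpDefect m Ap Am) (ENNReal.ofReal p) volume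
  refine ⟨N.toReal + 1, by positivity, fun t ht => ?_⟩
  have hsqrt : 0 < Real.sqrt t := sqrt_pos.2 ht
  have hN : N = ENNReal.ofReal N.toReal := (ENNReal.ofReal_toReal hf.eLpNorm_ne_top).symm
  have hexp : (1 / ENNReal.ofReal p).toReal = 1 / p := by
    rw [one_div, ENNReal.toReal_inv, ENNReal.toReal_ofReal hp.le, one_div]
  simp_rw [← jumpDefect_div m Ap Am hsqrt]
  calc eLpNorm (fun s => jumpDefect m Ap Am (s / √t)) (ENNReal.ofReal p) volume
      = ENNReal.ofReal (t ^ (1 / (2 * p))) * ENNReal.ofReal N.toReal := by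
        rw [eLpNorm_comp_div _ hsqrt, ← hN, hexp,
          ENNReal.ofReal_rpow_of_nonneg hsqrt.le (by positivity), sqrt_eq_rpow, ← rpow_mul ht.le,
          one_div_mul_one_div]
    _ ≤ ENNReal.ofReal (t ^ (1 / (2 * p))) * ENNReal.ofReal (N.toReal + 1) := by
        gcongr
        linarith
    _ = ENNReal.ofReal ((N.toReal + 1) * t ^ (1 / (2 * p))) := by
        rw [← ENNReal.ofReal_mul (by positivity), mul_comm]

end Lp

theorem le_mul_one_add_rpow_neg_of_le_div_pow {u v D K : ℝ} {k : ℕ} (hu : 0 ≤ u) (hD : 0 ≤ D)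
    (hvD : v ≤ D) (hvK : 1 ≤ u → v ≤ K / u ^ k) :
    v ≤ 2 ^ k * max D K * (1 + u) ^ (-(k : ℝ)) := by
  rw [rpow_neg (by positivity), rpow_natCast, ← div_eq_mul_inv, le_div_iff₀ (by positivity)]
  rcases le_total u 1 with hu1 | hu1
  · calc v * (1 + u) ^ k ≤ max D K * (1 + u) ^ k := by gcongr; exact hvD.trans (le_max_left _ _)
      _ ≤ max D K * 2 ^ k := by gcongr; linarith
      _ = 2 ^ k * max D K := mul_comm _ _
  · calc v * (1 + u) ^ k ≤ max D K / u ^ k * (1 + u) ^ k := by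
          gcongr; exact (hvK hu1).trans (by gcongr; exact le_max_right _ _)
      _ ≤ max D K / u ^ k * (2 * u) ^ k := by gcongr; linarith
      _ = 2 ^ k * max D K := by field_simp; ring

namespace ProfileSystem

variable {c₀ α : ℝ} {m n b : ℝ → Fin 3 → ℝ} {Ap Am : Fin 3 → ℝ}

theorem abs_le_one (h : ProfileSystem c₀ α m n b) (s : ℝ) (i : Fin 3) :
    |m s i| ≤ 1 ∧ |n s i| ≤ 1 ∧ |b s i| ≤ 1 := by
  obtain ⟨hSF, hm, hn, hb⟩ := h
  refine (hSF.scalar i).abs_le_one ?_ s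
  fin_cases i <;> simp [hm, hn, hb]

theorem apply_neg (h : ProfileSystem c₀ α m n b) (s : ℝ) :
    m (-s) = ![m s 0, -m s 1, -m s 2] := by
  obtain ⟨hSF, hm, hn, hb⟩ := h
  have hrefl (i : Fin 3) := (hSF.scalar i).reflect
    (fun s => by simp only [even_two, Even.neg_pow]) (fun s => by ring)
  have h0 := (hrefl 0).eq_of_apply_zero_eq (hSF.scalar 0)
    (by simp [hm]) (by simp [hn]) (by simp [hb])
  have h1 := (hrefl 1).eq_of_apply_zero_eq (hSF.scalar 1).neg
    (by simp [hm]) (by simp [hn]) (by simp [hb])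
  have h2 := (hrefl 2).eq_of_apply_zero_eq (hSF.scalar 2).neg
    (by simp [hm]) (by simp [hn]) (by simp [hb])
  ext i
  fin_cases i
  · exact congrFun h0.1 s
  · simpa using congrFun h1.1 s
  · simpa using congrFun h2.1 s

theorem abs_sub_le_div_sq (h : ProfileSystem c₀ α m n b) (hc₀ : 0 ≤ c₀) (hα : 0 < α)
    (hAp : Tendsto m atTop (𝓝 Ap)) (i : Fin 3) (s : ℝ) (hs : 1 ≤ s) :
    |m s i - Ap i| ≤ 16 * c₀ / α ^ 2 / s ^ 2 :=
  abs_sub_le_of_hasDerivAt_gaussian_mul hc₀ hα (fun s => (h.1.scalar i s).1)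
    (fun s => (h.abs_le_one s i).2.1) (tendsto_pi_nhds.1 hAp i) s hs

theorem exists_abs_sub_le_div (h : ProfileSystem c₀ α m n b) (hc₀ : 0 ≤ c₀) (hα : 0 ≤ α)
    (hAp : Tendsto m atTop (𝓝 Ap)) :
    ∃ K, ∀ (i : Fin 3) (s : ℝ), 1 ≤ s → |m s i - Ap i| ≤ K / s := by
  rcases hα.eq_or_lt with rfl | hα
  · refine ⟨4 * c₀, fun i s hs => ?_⟩
    have hSF : ScalarSerretFrenet (fun _ => c₀) (fun s => s / 2) (m · i) (n · i) (b · i) := by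
      simpa using h.1.scalar i
    exact hSF.abs_sub_le_of_linear_torsion hc₀ (fun s => (h.abs_le_one s i).2.2)
      (tendsto_pi_nhds.1 hAp i) s hs
  · refine ⟨16 * c₀ / α ^ 2, fun i s hs => (h.abs_sub_le_div_sq hc₀ hα hAp i s hs).trans ?_⟩
    gcongr
    exact le_self_pow₀ hs two_ne_zero

theorem abs_jumpDefect_apply (h : ProfileSystem c₀ α m n b) (hAm : Am = ![Ap 0, -Ap 1, -Ap 2])
    {s : ℝ} (hs : s ≠ 0) (i : Fin 3) : |jumpDefect m Ap Am s i| = |m |s| i - Ap i| := by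
  rcases hs.lt_or_gt with hs | hs
  · have hm : m s = ![m (-s) 0, -m (-s) 1, -m (-s) 2] := by simpa using h.apply_neg (-s)
    simp only [jumpDefect, indicator, mem_Ioi, mem_Iio, hs, hs.not_gt, if_true, if_false,
      abs_of_neg hs, hm, hAm]
    fin_cases i <;> simp [neg_add_eq_sub, abs_sub_comm]
  · simp [jumpDefect, indicator, hs, hs.not_gt, abs_of_pos hs]

theorem norm_jumpDefect_le (h : ProfileSystem c₀ α m n b) (hAp : Tendsto m atTop (𝓝 Ap))
    (hAm : Am = ![Ap 0, -Ap 1, -Ap 2]) {K : ℝ} {k : ℕ}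
    (hK : ∀ (i : Fin 3) (s : ℝ), 1 ≤ s → |m s i - Ap i| ≤ K / s ^ k) (s : ℝ) :
    ‖jumpDefect m Ap Am s‖ ≤ 2 ^ k * max 2 K * (1 + |s|) ^ (-(k : ℝ)) := by
  refine (pi_norm_le_iff_of_nonneg (by positivity)).2 fun i => ?_
  have hAp_le : |Ap i| ≤ 1 := le_of_tendsto (tendsto_pi_nhds.1 hAp i).abs
    (Eventually.of_forall fun s => (h.abs_le_one s i).1)
  rw [Real.norm_eq_abs]
  refine le_mul_one_add_rpow_neg_of_le_div_pow (abs_nonneg s) zero_le_two ?_ fun hs => ?_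
  · rcases eq_or_ne s 0 with rfl | hs
    · simpa [jumpDefect] using (h.abs_le_one 0 i).1.trans one_le_two
    · rw [h.abs_jumpDefect_apply hAm hs]
      linarith [abs_sub (m |s| i) (Ap i), (h.abs_le_one |s| i).1]
  · rw [h.abs_jumpDefect_apply hAm (abs_pos.1 (one_pos.trans_le hs))]
    exact hK i |s| hs

theorem exists_eLpNorm_rescaled_le (h : ProfileSystem c₀ α m n b)
    (hAp : Tendsto m atTop (𝓝 Ap)) (hAm : Am = ![Ap 0, -Ap 1, -Ap 2]) {K p : ℝ} {k : ℕ}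
    (hK : ∀ (i : Fin 3) (s : ℝ), 1 ≤ s → |m s i - Ap i| ≤ K / s ^ k) (hp : 0 < p)
    (hkp : 1 < k * p) :
    ∃ C : ℝ, 0 < C ∧ ∀ t : ℝ, 0 < t →
      eLpNorm (fun s : ℝ => m (s / Real.sqrt t) - (Ioi (0 : ℝ)).indicator (fun _ => Ap) s
        - (Iio (0 : ℝ)).indicator (fun _ => Am) s) (ENNReal.ofReal p) volume
        ≤ ENNReal.ofReal (C * t ^ (1 / (2 * p))) := by
  have hm : Continuous m := continuous_iff_continuousAt.2 fun s => (h.1 s).1.continuousAt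
  exact exists_eLpNorm_rescaled_jump_le hp <| memLp_of_norm_le_mul_one_add_abs_rpow_neg
    (aestronglyMeasurable_jumpDefect hm Ap Am volume) hp hkp (h.norm_jumpDefect_le hAp hAm hK)

end ProfileSystem

/-- Rate of convergence of the self-similar solution
`M(s,t) = m(s/√t)` towards the jump initial datum
`A⁺ χ_{(0,∞)} + A⁻ χ_{(−∞,0)}` in `L^p(ℝ)`: for every `p ∈ (1,∞)` the
`L^p`-norm is `≤ C t^{1/(2p)}`, and also for `p = 1` when `α > 0`. -/
theorem Lp_convergence_rate (c₀ α : ℝ) (hc₀ : 0 < c₀)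
    (hα : α ∈ Set.Icc (0 : ℝ) 1)
    (m n b : ℝ → Fin 3 → ℝ) (h : ProfileSystem c₀ α m n b)
    (Ap : Fin 3 → ℝ) (hAp : Tendsto m atTop (nhds Ap))
    (Am : Fin 3 → ℝ) (hAm : Am = ![Ap 0, -Ap 1, -Ap 2]) :
    (∀ p : ℝ, 1 < p → ∃ C : ℝ, 0 < C ∧ ∀ t : ℝ, 0 < t →
      eLpNorm
        (fun s : ℝ => m (s / Real.sqrt t)
          - (Set.Ioi (0 : ℝ)).indicator (fun _ => Ap) s
          - (Set.Iio (0 : ℝ)).indicator (fun _ => Am) s)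
        (ENNReal.ofReal p) volume
        ≤ ENNReal.ofReal (C * t ^ (1 / (2 * p)))) ∧
    (0 < α → ∃ C : ℝ, 0 < C ∧ ∀ t : ℝ, 0 < t →
      eLpNorm
        (fun s : ℝ => m (s / Real.sqrt t)
          - (Set.Ioi (0 : ℝ)).indicator (fun _ => Ap) s
          - (Set.Iio (0 : ℝ)).indicator (fun _ => Am) s)
        1 volume
        ≤ ENNReal.ofReal (C * t ^ (1 / (2 : ℝ)))) := by
  refine ⟨fun p hp => ?_, fun hα₀ => ?_⟩
  · obtain ⟨K, hK⟩ := h.exists_abs_sub_le_div hc₀.le hα.1 hAp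
    exact h.exists_eLpNorm_rescaled_le hAp hAm (k := 1) (by simpa using hK) (by linarith)
      (by simpa using hp)
  · simpa using h.exists_eLpNorm_rescaled_le hAp hAm (h.abs_sub_le_div_sq hc₀.le hα₀ hAp)
      one_pos (by norm_num)
end

section
/- Let c₀>0, α∈[0,1] and β=√(1−α²). Let m=(m₁,m₂,m₃), n=(n₁,n₂,n₃), b=(b₁,b₂,b₃):ℝ→ℝ³ be a solution of the self-similar profile system. Then for all s∈ℝ: m₁(−s)=m₁(s), m₂(−s)=−m₂(s), m₃(−s)=−m₃(s); n₁(−s)=−n₁(s), n₂(−s)=n₂(s), n₃(−s)=n₃(s); and b₁(−s)=−b₁(s), b₂(−s)=b₂(s), b₃(−s)=b₃(s). That is, m₁ is even, m₂ and m₃ are odd, n₁ and b₁ are odd, and n₂, n₃, b₂, b₃ are even. -/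
open Real Filter

/-!
The Serret–Frenet system is linear with a skew-symmetric coefficient matrix, so
`|m|² + |n|² + |b|²` is conserved along solutions; applied to the difference of two solutions
this shows that a solution is determined by its value at one point. Since the curvature is even
and the torsion odd, `s ↦ (R m(-s), -R n(-s), -R b(-s))`, with `R = diag(1, -1, -1)` the
half-turn about the first axis, is again a solution. It has the same frame as `(m, n, b)` at
`s = 0`, hence coincides with it.
-/

theorem HasDerivAt.dotProduct {ι : Type*} [Fintype ι] {f g : ℝ → ι → ℝ} {f' g' : ι → ℝ}
    {x : ℝ} (hf : HasDerivAt f f' x) (hg : HasDerivAt g g' x) :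
    HasDerivAt (fun x => f x ⬝ᵥ g x) (f' ⬝ᵥ g x + f x ⬝ᵥ g') x := by
  simp only [_root_.dotProduct, ← Finset.sum_add_distrib]
  exact HasDerivAt.fun_sum fun i _ => (hasDerivAt_pi.1 hf i).mul (hasDerivAt_pi.1 hg i)

namespace SerretFrenet

variable {c τ : ℝ → ℝ} {m n b : ℝ → Fin 3 → ℝ}

theorem sub {m' n' b' : ℝ → Fin 3 → ℝ} (h : SerretFrenet c τ m n b)
    (h' : SerretFrenet c τ m' n' b') : SerretFrenet c τ (m - m') (n - n') (b - b') := by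
  intro s
  obtain ⟨hm, hn, hb⟩ := h s
  obtain ⟨hm', hn', hb'⟩ := h' s
  refine ⟨(hm.sub hm').congr_deriv ?_, (hn.sub hn').congr_deriv ?_, (hb.sub hb').congr_deriv ?_⟩ <;>
    simp only [Pi.sub_apply] <;> module

theorem map (h : SerretFrenet c τ m n b) (L : (Fin 3 → ℝ) →L[ℝ] (Fin 3 → ℝ)) :
    SerretFrenet c τ (L ∘ m) (L ∘ n) (L ∘ b) := by
  intro s
  obtain ⟨hm, hn, hb⟩ := h s
  refine ⟨(L.hasFDerivAt.comp_hasDerivAt s hm).congr_deriv ?_,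
    (L.hasFDerivAt.comp_hasDerivAt s hn).congr_deriv ?_,
    (L.hasFDerivAt.comp_hasDerivAt s hb).congr_deriv ?_⟩ <;> simp

theorem comp_neg (h : SerretFrenet c τ m n b) (hc : ∀ s, c (-s) = c s)
    (hτ : ∀ s, τ (-s) = -τ s) :
    SerretFrenet c τ (fun s => m (-s)) (fun s => -n (-s)) (fun s => -b (-s)) := by
  intro s
  obtain ⟨hm, hn, hb⟩ := h (-s)
  refine ⟨(hm.scomp s (hasDerivAt_neg s)).congr_deriv ?_,
    (hn.scomp s (hasDerivAt_neg s)).neg.congr_deriv ?_,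
    (hb.scomp s (hasDerivAt_neg s)).neg.congr_deriv ?_⟩ <;>
    simp only [hc, hτ] <;> module

theorem dotProduct_self_add_eq (h : SerretFrenet c τ m n b) (s t : ℝ) :
    m s ⬝ᵥ m s + n s ⬝ᵥ n s + b s ⬝ᵥ b s = m t ⬝ᵥ m t + n t ⬝ᵥ n t + b t ⬝ᵥ b t := by
  have hderiv : ∀ s, HasDerivAt (fun s => m s ⬝ᵥ m s + n s ⬝ᵥ n s + b s ⬝ᵥ b s) 0 s := by
    intro s
    obtain ⟨hm, hn, hb⟩ := h s
    refine (((hm.dotProduct hm).add (hn.dotProduct hn)).add (hb.dotProduct hb)).congr_deriv ?_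
    simp only [add_dotProduct, dotProduct_add, smul_dotProduct, dotProduct_smul,
      dotProduct_comm (n s) (m s), dotProduct_comm (b s) (n s), smul_eq_mul]
    ring
  exact is_const_of_deriv_eq_zero (fun s => (hderiv s).differentiableAt)
    (fun s => (hderiv s).deriv) s t

theorem eq_zero_of_apply_eq_zero (h : SerretFrenet c τ m n b) {s₀ : ℝ} (hm : m s₀ = 0)
    (hn : n s₀ = 0) (hb : b s₀ = 0) : m = 0 ∧ n = 0 ∧ b = 0 := by
  have hzero : ∀ s, m s ⬝ᵥ m s + n s ⬝ᵥ n s + b s ⬝ᵥ b s = 0 := fun s => by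
    simpa [hm, hn, hb] using h.dotProduct_self_add_eq s s₀
  have hnonneg (v : Fin 3 → ℝ) : 0 ≤ v ⬝ᵥ v := Fintype.sum_nonneg fun i => mul_self_nonneg (v i)
  refine ⟨funext fun s => ?_, funext fun s => ?_, funext fun s => ?_⟩ <;>
    refine dotProduct_self_eq_zero.1 ?_ <;>
    linarith [hzero s, hnonneg (m s), hnonneg (n s), hnonneg (b s)]

theorem eq_of_apply_eq {m' n' b' : ℝ → Fin 3 → ℝ} (h : SerretFrenet c τ m n b)
    (h' : SerretFrenet c τ m' n' b') {s₀ : ℝ} (hm : m s₀ = m' s₀) (hn : n s₀ = n' s₀)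
    (hb : b s₀ = b' s₀) : m = m' ∧ n = n' ∧ b = b' := by
  obtain ⟨hm, hn, hb⟩ := (h.sub h').eq_zero_of_apply_eq_zero (s₀ := s₀)
    (sub_eq_zero.2 hm) (sub_eq_zero.2 hn) (sub_eq_zero.2 hb)
  exact ⟨sub_eq_zero.1 hm, sub_eq_zero.1 hn, sub_eq_zero.1 hb⟩

end SerretFrenet

def halfTurn : (Fin 3 → ℝ) →L[ℝ] (Fin 3 → ℝ) :=
  ContinuousLinearMap.pi fun i => (![1, -1, -1] : Fin 3 → ℝ) i • ContinuousLinearMap.proj i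

@[simp]
theorem halfTurn_apply (x : Fin 3 → ℝ) : halfTurn x = ![x 0, -x 1, -x 2] := by
  ext i; fin_cases i <;> simp [halfTurn]

theorem profile_symmetries_general (c₀ α : ℝ)
    (m n b : ℝ → Fin 3 → ℝ) (h : ProfileSystem c₀ α m n b) :
    ∀ s : ℝ,
      m (-s) 0 = m s 0 ∧ m (-s) 1 = -m s 1 ∧ m (-s) 2 = -m s 2 ∧
      n (-s) 0 = -n s 0 ∧ n (-s) 1 = n s 1 ∧ n (-s) 2 = n s 2 ∧
      b (-s) 0 = -b s 0 ∧ b (-s) 1 = b s 1 ∧ b (-s) 2 = b s 2 := by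
  obtain ⟨hsf, hm₀, hn₀, hb₀⟩ := h
  have hsym := (hsf.comp_neg (fun s => by simp only [neg_sq]) (fun s => by ring)).map halfTurn
  obtain ⟨hm, hn, hb⟩ := hsym.eq_of_apply_eq hsf (s₀ := 0)
    (by simp [hm₀]) (by simp [hn₀]) (by simp [hb₀])
  intro s
  replace hm := congrFun hm s
  replace hn := congrFun hn s
  replace hb := congrFun hb s
  simp only [funext_iff, Fin.forall_fin_succ, Function.comp_apply, halfTurn_apply, Pi.neg_apply,
    neg_neg, Matrix.cons_val_zero, Matrix.cons_val_succ, Fin.succ_zero_eq_one, Fin.succ_one_eq_two,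
    IsEmpty.forall_iff, and_true] at hm hn hb
  obtain ⟨hm₁, hm₂, hm₃⟩ := hm
  obtain ⟨hn₁, hn₂, hn₃⟩ := hn
  obtain ⟨hb₁, hb₂, hb₃⟩ := hb
  exact ⟨hm₁, by linarith, by linarith, by linarith, hn₂, hn₃, by linarith, hb₂, hb₃⟩

/-- **Symmetries.** For the self-similar profile,
`m₁` is even, `m₂, m₃` are odd; `n₁, b₁` are odd and `n₂, n₃, b₂, b₃` are even. -/
theorem profile_symmetries (c₀ α : ℝ) (hc₀ : 0 < c₀)
    (hα : α ∈ Set.Icc (0 : ℝ) 1)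
    (m n b : ℝ → Fin 3 → ℝ) (h : ProfileSystem c₀ α m n b) :
    ∀ s : ℝ,
      m (-s) 0 = m s 0 ∧ m (-s) 1 = -m s 1 ∧ m (-s) 2 = -m s 2 ∧
      n (-s) 0 = -n s 0 ∧ n (-s) 1 = n s 1 ∧ n (-s) 2 = n s 2 ∧
      b (-s) 0 = -b s 0 ∧ b (-s) 1 = b s 1 ∧ b (-s) 2 = b s 2 :=
  profile_symmetries_general c₀ α m n b h
end

section
/- Let c:ℝ→ℝ be differentiable with c(s)>0 for all s, let τ:ℝ→ℝ be continuous, and let m=(m₁,m₂,m₃), n=(n₁,n₂,n₃), b=(b₁,b₂,b₃):ℝ→ℝ³ solve the Serret–Frenet system with curvature c and torsion τ. Fix j∈{1,2,3} and let I be an interval containing 0 on which 1+m_j(s)>0. On I define η_j(s)=(n_j(s)+i·b_j(s))/(1+m_j(s)) and f_j(s)=exp((1/2)∫₀^s c(σ)η_j(σ)dσ). Then on I: f_j satisfies f_j''(s) + (iτ(s) − c'(s)/c(s))·f_j'(s) + (c(s)²/4)·f_j(s) = 0, with f_j(0)=1 and f_j'(0)=c(0)(n_j(0)+i·b_j(0))/(2(1+m_j(0)));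 moreover, for s∈I (where f_j(s)≠0), m_j(s) = 2·(1 + (4/c(s)²)·|f_j'(s)/f_j(s)|²)^{−1} − 1 and n_j(s)+i·b_j(s) = (4f_j'(s)/(c(s)f_j(s)))·(1 + (4/c(s)²)·|f_j'(s)/f_j(s)|²)^{−1}. -/
open Real Filter

/-!
The function `η_j` is the stereographic projection of the unit vector `(m_j, n_j, b_j)` from
the pole `(-1, 0, 0)`. The Serret–Frenet equations make it a solution of the Riccati equation
`η' = -iτη - (c/2)(1 + η²)`, and `f = exp(½∫ cη)`, i.e. `η = 2f'/(cf)`, is the substitution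
that linearises this Riccati equation into the second-order ODE. The formulas for `m_j` and
`n_j + i b_j` are inverse stereographic projection, using `|η|² = (1 - m_j)/(1 + m_j)`.
-/

open Complex

namespace SerretFrenet

variable {c τ : ℝ → ℝ} {m n b : ℝ → Fin 3 → ℝ}

theorem hasDerivAt_m_apply (h : SerretFrenet c τ m n b) (j : Fin 3) (s : ℝ) :
    HasDerivAt (fun t => m t j) (c s * n s j) s := by
  simpa using hasDerivAt_pi.mp (h s).1 j

theorem hasDerivAt_n_apply (h : SerretFrenet c τ m n b) (j : Fin 3) (s : ℝ) :
    HasDerivAt (fun t => n t j) (-c s * m s j + τ s * b s j) s := by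
  simpa using hasDerivAt_pi.mp (h s).2.1 j

theorem hasDerivAt_b_apply (h : SerretFrenet c τ m n b) (j : Fin 3) (s : ℝ) :
    HasDerivAt (fun t => b t j) (-τ s * n s j) s := by
  simpa using hasDerivAt_pi.mp (h s).2.2 j

end SerretFrenet

noncomputable def stereographicCoord (x y z : ℝ) : ℂ := ((y : ℂ) + (z : ℂ) * I) / (1 + (x : ℂ))

section Stereographic

variable {x y z : ℝ}

theorem sq_norm_stereographicCoord (hsphere : x ^ 2 + y ^ 2 + z ^ 2 = 1) (hx : 1 + x ≠ 0) :
    ‖stereographicCoord x y z‖ ^ 2 = (1 - x) / (1 + x) := by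
  rw [stereographicCoord, Complex.sq_norm, Complex.normSq_div, Complex.normSq_add_mul_I,
    show (1 : ℂ) + (x : ℂ) = ((1 + x : ℝ) : ℂ) by push_cast; ring, Complex.normSq_ofReal,
    show y ^ 2 + z ^ 2 = (1 - x) * (1 + x) by linear_combination hsphere]
  field_simp

theorem one_add_sq_norm_stereographicCoord (hsphere : x ^ 2 + y ^ 2 + z ^ 2 = 1)
    (hx : 1 + x ≠ 0) : 1 + ‖stereographicCoord x y z‖ ^ 2 = 2 / (1 + x) := by
  rw [sq_norm_stereographicCoord hsphere hx]
  field_simp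
  ring

theorem eq_of_stereographicCoord (hsphere : x ^ 2 + y ^ 2 + z ^ 2 = 1) (hx : 1 + x ≠ 0) :
    x = 2 * (1 + ‖stereographicCoord x y z‖ ^ 2)⁻¹ - 1 := by
  rw [one_add_sq_norm_stereographicCoord hsphere hx, inv_div]
  ring

theorem add_mul_I_eq_of_stereographicCoord (hsphere : x ^ 2 + y ^ 2 + z ^ 2 = 1)
    (hx : 1 + x ≠ 0) :
    (y : ℂ) + (z : ℂ) * I
      = 2 * stereographicCoord x y z * (1 + ((‖stereographicCoord x y z‖ ^ 2 : ℝ) : ℂ))⁻¹ := by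
  rw [← Complex.ofReal_one, ← Complex.ofReal_add, one_add_sq_norm_stereographicCoord hsphere hx,
    stereographicCoord]
  push_cast
  have hx' : (1 : ℂ) + (x : ℂ) ≠ 0 := by exact_mod_cast hx
  field_simp

theorem hasDerivAt_stereographicCoord {μ ν β : ℝ → ℝ} {c τ s : ℝ}
    (hμ : HasDerivAt μ (c * ν s) s) (hν : HasDerivAt ν (-c * μ s + τ * β s) s)
    (hβ : HasDerivAt β (-τ * ν s) s) (hsphere : μ s ^ 2 + ν s ^ 2 + β s ^ 2 = 1)
    (hμs : 1 + μ s ≠ 0) :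
    HasDerivAt (fun t => stereographicCoord (μ t) (ν t) (β t))
      (-(τ : ℂ) * I * stereographicCoord (μ s) (ν s) (β s)
        - (c : ℂ) / 2 * (1 + stereographicCoord (μ s) (ν s) (β s) ^ 2)) s := by
  have hnum : HasDerivAt (fun t => (ν t : ℂ) + (β t : ℂ) * I)
      (((-c * μ s + τ * β s : ℝ) : ℂ) + ((-τ * ν s : ℝ) : ℂ) * I) s :=
    hν.ofReal_comp.add (hβ.ofReal_comp.mul_const I)
  have hden : HasDerivAt (fun t => 1 + (μ t : ℂ)) ((c * ν s : ℝ) : ℂ) s :=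
    hμ.ofReal_comp.const_add 1
  have hμs' : (1 : ℂ) + (μ s : ℂ) ≠ 0 := by exact_mod_cast hμs
  refine (hnum.div hden hμs').congr_deriv ?_
  have hsphere' : (μ s : ℂ) ^ 2 + (ν s : ℂ) ^ 2 + (β s : ℂ) ^ 2 = 1 := by exact_mod_cast hsphere
  rw [stereographicCoord]
  push_cast
  field_simp
  linear_combination (2 * (1 + (μ s : ℂ)) * τ * β s + c * β s ^ 2) * Complex.I_sq
    - (c : ℂ) * hsphere'

end Stereographic

theorem hasDerivAt_integral_of_continuousOn {E : Type*} [NormedAddCommGroup E]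
    [NormedSpace ℝ E] [CompleteSpace E] {g : ℝ → E} {U : Set ℝ} {a s : ℝ}
    (hU : IsOpen U) (hUc : U.OrdConnected) (ha : a ∈ U) (hg : ContinuousOn g U) (hs : s ∈ U) :
    HasDerivAt (fun t => ∫ σ in a..t, g σ) (g s) s :=
  intervalIntegral.integral_hasDerivAt_right
    ((hg.mono (hUc.uIcc_subset ha hs)).intervalIntegrable)
    (ContinuousAt.stronglyMeasurableAtFilter hU
      (fun _ ht => hg.continuousAt (hU.mem_nhds ht)) s hs)
    (hg.continuousAt (hU.mem_nhds hs))

theorem hasDerivAt_cexp_const_mul_integral {g : ℝ → ℂ} {U : Set ℝ} {a s : ℝ} (k : ℂ)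
    (hU : IsOpen U) (hUc : U.OrdConnected) (ha : a ∈ U) (hg : ContinuousOn g U) (hs : s ∈ U) :
    HasDerivAt (fun t => cexp (k * ∫ σ in a..t, g σ))
      (k * g s * cexp (k * ∫ σ in a..s, g σ)) s := by
  convert ((hasDerivAt_integral_of_continuousOn hU hUc ha hg hs).const_mul k).cexp using 1
  ring

theorem deriv_deriv_of_hasDerivAt_mul_self {f g : ℝ → ℂ} {g' : ℂ} {U : Set ℝ} {s : ℝ}
    (hU : IsOpen U) (hs : s ∈ U) (hf : ∀ t ∈ U, HasDerivAt f (g t * f t) t)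
    (hg : HasDerivAt g g' s) :
    deriv (deriv f) s = (g' + g s ^ 2) * f s := by
  have hderiv : deriv f =ᶠ[nhds s] fun t => g t * f t :=
    Filter.eventually_of_mem (hU.mem_nhds hs) fun t ht => (hf t ht).deriv
  rw [hderiv.deriv_eq]
  exact (hg.mul (hf s hs)).deriv.trans (by ring)

theorem linear_ode_of_riccati {c : ℝ → ℝ} {η f : ℝ → ℂ} {U : Set ℝ} {c' τ s : ℝ}
    (hU : IsOpen U) (hs : s ∈ U) (hc : HasDerivAt c c' s) (hcs : c s ≠ 0)
    (hη : HasDerivAt η (-(τ : ℂ) * I * η s - (c s : ℂ) / 2 * (1 + η s ^ 2)) s)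
    (hf : ∀ t ∈ U, HasDerivAt f ((c t : ℂ) / 2 * η t * f t) t) :
    deriv (deriv f) s + ((τ : ℂ) * I - (c' : ℂ) / (c s : ℂ)) * deriv f s
      + ((c s : ℂ) ^ 2 / 4) * f s = 0 := by
  have hcs' : (c s : ℂ) ≠ 0 := by exact_mod_cast hcs
  rw [deriv_deriv_of_hasDerivAt_mul_self hU hs hf ((hc.ofReal_comp.div_const 2).mul hη),
    (hf s hs).deriv]
  field_simp
  ring

theorem eq_of_deriv_eq_mul_stereographicCoord {F F' : ℂ} {c x y z : ℝ}
    (hsphere : x ^ 2 + y ^ 2 + z ^ 2 = 1) (hx : 1 + x ≠ 0) (hc : 0 < c) (hF : F ≠ 0)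
    (hF' : F' = (c : ℂ) / 2 * stereographicCoord x y z * F) :
    x = 2 * (1 + (4 / c ^ 2) * ‖F' / F‖ ^ 2)⁻¹ - 1 ∧
      (y : ℂ) + (z : ℂ) * I
        = (4 * F' / ((c : ℂ) * F)) * ((1 : ℂ) + (4 / c ^ 2 : ℝ) * (‖F' / F‖ ^ 2 : ℝ))⁻¹ := by
  have hc' : (c : ℂ) ≠ 0 := by exact_mod_cast hc.ne'
  have hratio : F' / F = (c : ℂ) / 2 * stereographicCoord x y z := by
    rw [hF']
    field_simp
  have hnorm : 4 / c ^ 2 * ‖F' / F‖ ^ 2 = ‖stereographicCoord x y z‖ ^ 2 := by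
    rw [hratio, norm_mul, norm_div, Complex.norm_real, Complex.norm_two,
      Real.norm_of_nonneg hc.le]
    field_simp
    ring
  rw [← Complex.ofReal_mul, hnorm, mul_comm (c : ℂ), ← div_div, mul_div_assoc, hratio]
  refine ⟨eq_of_stereographicCoord hsphere hx, ?_⟩
  rw [add_mul_I_eq_of_stereographicCoord hsphere hx]
  congr 1
  field_simp
  ring

open intervalIntegral Complex in
theorem serret_frenet_reduction_general (c c' τ : ℝ → ℝ)
    (hc : ∀ s : ℝ, HasDerivAt c (c' s) s) (hcpos : ∀ s : ℝ, 0 < c s)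
    (m n b : ℝ → Fin 3 → ℝ) (hSF : SerretFrenet c τ m n b)
    (j : Fin 3)
    (hframe : ∀ s : ℝ, (m s j) ^ 2 + (n s j) ^ 2 + (b s j) ^ 2 = 1)
    (I : Set ℝ) (hIopen : IsOpen I) (hIint : I.OrdConnected) (h0 : (0 : ℝ) ∈ I)
    (hmI : ∀ s ∈ I, (0 : ℝ) < 1 + m s j)
    (η : ℝ → ℂ)
    (hη : ∀ s : ℝ, η s = ((n s j : ℂ) + (b s j : ℂ) * Complex.I) / (1 + (m s j : ℂ)))
    (f : ℝ → ℂ)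
    (hf : ∀ s : ℝ, f s = Complex.exp ((1 / 2) * ∫ σ in (0 : ℝ)..s, (c σ : ℂ) * η σ)) :
    (∀ s ∈ I,
      deriv (deriv f) s
        + ((τ s : ℂ) * Complex.I - (c' s : ℂ) / (c s : ℂ)) * deriv f s
        + ((c s : ℂ) ^ 2 / 4) * f s = 0) ∧
    f 0 = 1 ∧
    deriv f 0 = (c 0 : ℂ) * ((n 0 j : ℂ) + (b 0 j : ℂ) * Complex.I)
      / (2 * (1 + (m 0 j : ℂ))) ∧
    (∀ s ∈ I,
      m s j = 2 * (1 + (4 / (c s) ^ 2) * ‖deriv f s / f s‖ ^ 2)⁻¹ - 1 ∧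
      ((n s j : ℂ) + (b s j : ℂ) * Complex.I)
        = (4 * deriv f s / ((c s : ℂ) * f s))
          * ((1 : ℂ) + (4 / (c s) ^ 2 : ℝ) * (‖deriv f s / f s‖ ^ 2 : ℝ))⁻¹) := by
  have hmj : ∀ s ∈ I, 1 + m s j ≠ 0 := fun s hs => (hmI s hs).ne'
  have hriccati : ∀ s ∈ I,
      HasDerivAt η (-(τ s : ℂ) * Complex.I * η s - (c s : ℂ) / 2 * (1 + η s ^ 2)) s := by
    intro s hs
    rw [funext hη]
    exact hasDerivAt_stereographicCoord (μ := fun t => m t j) (hSF.hasDerivAt_m_apply j s)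
      (hSF.hasDerivAt_n_apply j s) (hSF.hasDerivAt_b_apply j s) (hframe s) (hmj s hs)
  have hcη : ContinuousOn (fun σ => (c σ : ℂ) * η σ) I := fun s hs =>
    ((hc s).ofReal_comp.mul (hriccati s hs)).continuousAt.continuousWithinAt
  have hf' : ∀ s ∈ I, HasDerivAt f ((c s : ℂ) / 2 * η s * f s) s := by
    intro s hs
    rw [funext hf]
    convert hasDerivAt_cexp_const_mul_integral (1 / 2) hIopen hIint h0 hcη hs using 1
    ring
  have hf0 : f 0 = 1 := by simp [hf 0]
  refine ⟨fun s hs => ?_, hf0, ?_, fun s hs => ?_⟩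
  · exact linear_ode_of_riccati hIopen hs (hc s) (hcpos s).ne' (hriccati s hs) hf'
  · rw [(hf' 0 h0).deriv, hf0, hη 0]
    field_simp
  · refine eq_of_deriv_eq_mul_stereographicCoord (hframe s) (hmj s hs) (hcpos s) ?_ ?_
    · rw [hf s]
      exact Complex.exp_ne_zero _
    · rw [(hf' s hs).deriv, hη s, stereographicCoord]

open intervalIntegral Complex in
/-- **Reduction to a second-order ODE.** For a Serret–Frenet
frame with positive curvature, the stereographic variable
`η_j = (n_j + i b_j)/(1+m_j)` and `f_j = exp(½∫₀ˢ c η_j)` satisfy a second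
order linear ODE, with explicit initial data and inverse formulas for
`m_j, n_j, b_j` in terms of `f_j, f_j'`. -/
theorem serret_frenet_reduction (c c' τ : ℝ → ℝ)
    (hc : ∀ s : ℝ, HasDerivAt c (c' s) s) (hcpos : ∀ s : ℝ, 0 < c s)
    (hτ : Continuous τ)
    (m n b : ℝ → Fin 3 → ℝ) (hSF : SerretFrenet c τ m n b)
    (j : Fin 3)
    (hframe : ∀ s : ℝ, (m s j) ^ 2 + (n s j) ^ 2 + (b s j) ^ 2 = 1)
    (I : Set ℝ) (hIopen : IsOpen I) (hIint : I.OrdConnected) (h0 : (0 : ℝ) ∈ I)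
    (hmI : ∀ s ∈ I, (0 : ℝ) < 1 + m s j)
    (η : ℝ → ℂ)
    (hη : ∀ s : ℝ, η s = ((n s j : ℂ) + (b s j : ℂ) * Complex.I) / (1 + (m s j : ℂ)))
    (f : ℝ → ℂ)
    (hf : ∀ s : ℝ, f s = Complex.exp ((1 / 2) * ∫ σ in (0 : ℝ)..s, (c σ : ℂ) * η σ)) :
    (∀ s ∈ I,
      deriv (deriv f) s
        + ((τ s : ℂ) * Complex.I - (c' s : ℂ) / (c s : ℂ)) * deriv f s
        + ((c s : ℂ) ^ 2 / 4) * f s = 0) ∧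
    f 0 = 1 ∧
    deriv f 0 = (c 0 : ℂ) * ((n 0 j : ℂ) + (b 0 j : ℂ) * Complex.I)
      / (2 * (1 + (m 0 j : ℂ))) ∧
    (∀ s ∈ I,
      m s j = 2 * (1 + (4 / (c s) ^ 2) * ‖deriv f s / f s‖ ^ 2)⁻¹ - 1 ∧
      ((n s j : ℂ) + (b s j : ℂ) * Complex.I)
        = (4 * deriv f s / ((c s : ℂ) * f s))
          * ((1 : ℂ) + (4 / (c s) ^ 2 : ℝ) * (‖deriv f s / f s‖ ^ 2 : ℝ))⁻¹) :=
  serret_frenet_reduction_general c c' τ hc hcpos m n b hSF j hframe I hIopen hIint h0 hmI η hη f hf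
end
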